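/- For every integer e ≥ 2, ν_2(f(2^e - 2)) = -(e-1), where f(n) = ∑_{k=0}^{n} C(n,k)^{-1}. -/

import Mathlib

/-!
Pairing `1/C(n+1,k) + 1/C(n+1,k+1) = (n+2)/((n+1) C(n,k))` gives `2 f(n+1) = (n+2)/(n+1) f(n) + 2`,
whence `(n+1) S(n+1) = 2^(n+1) f(n)` for `S(m) = ∑_{k=1}^m 2^k/k` (`sumTwoPowDiv`).
So `ν₂ f(2^e-2) = ν₂ S(2^e-1) - (2^e-1)`, and `ν₂ S(2^e-1) = 2^e - e` is the valuation of the first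
omitted term `2^(2^e)/2^e`: 2-adically `∑ 2^k/k = -log(1-2) = 0`. To make this finite, compare with
`S(2^(e+2))`. Each term `2^k/k` with `2^e < k` has valuation `k - ν₂ k > 2^e - e`, and the identity at
`n = 2^E - 1` together with `ν₂ C(n,k) ≤ log₂ n` gives `ν₂ S(2^E) ≥ 2^E - 2E`.
-/

def f (n : ℕ) : ℚ := ∑ k ∈ Finset.range (n + 1), ((n.choose k : ℚ))⁻¹

open Finset

lemma f_pos (n : ℕ) : 0 < f n := by
  refine sum_pos (fun k hk => ?_) ⟨0, by simp⟩
  have := Nat.choose_pos (Nat.lt_succ_iff.mp (mem_range.mp hk))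
  positivity

lemma inv_choose_add_inv_choose_succ {n k : ℕ} (hk : k ≤ n) :
    ((n + 1).choose k : ℚ)⁻¹ + ((n + 1).choose (k + 1) : ℚ)⁻¹
      = (n + 2) / ((n + 1) * n.choose k) := by
  have h₁ : (n.choose k : ℚ) * (n + 1) = (n + 1).choose k * (n + 1 - k) := by
    rw [← Nat.cast_add_one, ← Nat.cast_sub (by omega)]
    exact_mod_cast Nat.choose_mul_succ_eq n k
  have h₂ : ((n : ℚ) + 1) * n.choose k = (n + 1).choose (k + 1) * (k + 1) := by
    exact_mod_cast Nat.add_one_mul_choose_eq n k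
  have hc₁ : ((n + 1).choose k : ℚ) ≠ 0 := by exact_mod_cast (Nat.choose_pos (by omega)).ne'
  have hc₂ : ((n + 1).choose (k + 1) : ℚ) ≠ 0 := by exact_mod_cast (Nat.choose_pos (by omega)).ne'
  have hc : (n.choose k : ℚ) ≠ 0 := by exact_mod_cast (Nat.choose_pos hk).ne'
  field_simp
  linear_combination ((n + 1).choose (k + 1) : ℚ) * h₁ + ((n + 1).choose k : ℚ) * h₂

lemma f_succ (n : ℕ) : 2 * f (n + 1) = (n + 2) / (n + 1) * f n + 2 := by
  have hlast : f (n + 1) = ∑ k ∈ range (n + 1), ((n + 1).choose k : ℚ)⁻¹ + 1 := by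
    rw [f, sum_range_succ, Nat.choose_self, Nat.cast_one, inv_one]
  have hfirst : f (n + 1) = ∑ k ∈ range (n + 1), ((n + 1).choose (k + 1) : ℚ)⁻¹ + 1 := by
    rw [f, sum_range_succ', Nat.choose_zero_right, Nat.cast_one, inv_one]
  calc 2 * f (n + 1)
      = ∑ k ∈ range (n + 1), (((n + 1).choose k : ℚ)⁻¹ + ((n + 1).choose (k + 1) : ℚ)⁻¹)
          + 2 := by
        rw [sum_add_distrib]; linear_combination hlast + hfirst
    _ = ∑ k ∈ range (n + 1), (n + 2) / (n + 1) * (n.choose k : ℚ)⁻¹ + 2 := by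
        congr 1
        refine sum_congr rfl fun k hk => ?_
        rw [inv_choose_add_inv_choose_succ (Nat.lt_succ_iff.mp (mem_range.mp hk))]
        field_simp
    _ = (n + 2) / (n + 1) * f n + 2 := by rw [← mul_sum, f]

def sumTwoPowDiv (m : ℕ) : ℚ := ∑ k ∈ range m, 2 ^ (k + 1) / (k + 1)

lemma sumTwoPowDiv_pos {m : ℕ} (hm : m ≠ 0) : 0 < sumTwoPowDiv m :=
  sum_pos (fun _ _ => by positivity) (nonempty_range_iff.mpr hm)

lemma succ_mul_sumTwoPowDiv_succ (n : ℕ) :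
    (n + 1 : ℚ) * sumTwoPowDiv (n + 1) = 2 ^ (n + 1) * f n := by
  induction n with
  | zero => simp [sumTwoPowDiv, f]
  | succ n ih =>
    rw [sumTwoPowDiv, sum_range_succ, ← sumTwoPowDiv]
    have hn : (n + 1 : ℚ) ≠ 0 := by positivity
    have hrec := f_succ n
    field_simp at hrec
    push_cast
    field_simp
    apply mul_left_cancel₀ hn
    linear_combination (n + 2 : ℚ) * ih - 2 ^ (n + 1) * hrec

lemma le_padicValRat_sum {p : ℕ} [Fact p.Prime] {ι : Type*} {s : Finset ι} {F : ι → ℚ} {c : ℤ}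
    (hF : ∀ i ∈ s, c ≤ padicValRat p (F i)) (hs : ∑ i ∈ s, F i ≠ 0) :
    c ≤ padicValRat p (∑ i ∈ s, F i) := by
  classical
  induction s using Finset.induction_on with
  | empty => simp at hs
  | insert a s ha ih =>
    rw [sum_insert ha] at hs ⊢
    by_cases hs0 : ∑ i ∈ s, F i = 0
    · simpa [hs0] using hF a (mem_insert_self a s)
    have hs' := ih (fun i hi => hF i (mem_insert_of_mem hi)) hs0
    exact (le_min (hF a (mem_insert_self a s)) hs').trans (padicValRat.min_le_padicValRat_add hs)

lemma neg_log_le_padicValRat_f (p : ℕ) [Fact p.Prime] (n : ℕ) :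
    -(Nat.log p n : ℤ) ≤ padicValRat p (f n) := by
  refine le_padicValRat_sum (fun k hk => ?_) (f_pos n).ne'
  have hc : n.choose k ≠ 0 := (Nat.choose_pos (Nat.lt_succ_iff.mp (mem_range.mp hk))).ne'
  rw [padicValRat.inv, padicValRat.of_nat, neg_le_neg_iff, ← Nat.factorization_def _ Fact.out]
  exact_mod_cast Nat.factorization_choose_le_log

lemma padicValRat_two_pow (k : ℕ) : padicValRat 2 ((2 : ℚ) ^ k) = k := by
  rw [padicValRat.pow, show (2 : ℚ) = (2 : ℕ) by norm_num, padicValRat.self one_lt_two, mul_one]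

lemma padicValRat_f (n : ℕ) :
    padicValRat 2 (f n)
      = padicValNat 2 (n + 1) + padicValRat 2 (sumTwoPowDiv (n + 1)) - (n + 1 : ℕ) := by
  have h : ((n + 1 : ℕ) : ℚ) * sumTwoPowDiv (n + 1) = 2 ^ (n + 1) * f n := by
    exact_mod_cast succ_mul_sumTwoPowDiv_succ n
  replace h := congrArg (padicValRat 2) h
  rw [padicValRat.mul (by positivity) (sumTwoPowDiv_pos n.succ_ne_zero).ne',
    padicValRat.mul (by positivity) (f_pos n).ne', padicValRat.of_nat, padicValRat_two_pow] at h
  linarith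

lemma two_pow_sub_two_mul_le_padicValRat_sumTwoPowDiv (E : ℕ) :
    (2 ^ E : ℤ) - 2 * E ≤ padicValRat 2 (sumTwoPowDiv (2 ^ E)) := by
  have hE : 2 ^ E - 1 + 1 = 2 ^ E := Nat.sub_add_cancel Nat.one_le_two_pow
  have h := padicValRat_f (2 ^ E - 1)
  rw [hE, padicValNat.prime_pow] at h
  have hlog : Nat.log 2 (2 ^ E - 1) ≤ E :=
    (Nat.log_mono_right (Nat.sub_le _ _)).trans (Nat.log_pow one_lt_two E).le
  have := neg_log_le_padicValRat_f 2 (2 ^ E - 1)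
  push_cast at h
  omega

lemma monotone_sub_log {b : ℕ} (hb : 1 < b) : Monotone fun n : ℕ => (n : ℤ) - Nat.log b n := by
  refine monotone_nat_of_le_succ fun n => ?_
  have : Nat.log b (n + 1) ≤ Nat.log b n + 1 := by
    rcases n.eq_zero_or_pos with rfl | hn
    · simp
    calc Nat.log b (n + 1) ≤ Nat.log b (n * b) := Nat.log_mono_right (by nlinarith)
      _ = Nat.log b n + 1 := Nat.log_mul_base hb hn.ne'
  push_cast
  omega

lemma two_pow_sub_lt_sub_padicValNat {e k : ℕ} (he : 1 ≤ e) (hk : 2 ^ e < k) :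
    (2 ^ e : ℤ) - e < k - padicValNat 2 k := by
  have hlog : Nat.log 2 (2 ^ e + 1) = e :=
    Nat.log_eq_of_pow_le_of_lt_pow (Nat.le_succ _)
    (by have := Nat.one_lt_two_pow (n := e) (by omega); rw [pow_succ]; omega)
  calc (2 ^ e : ℤ) - e < (2 ^ e + 1 : ℕ) - Nat.log 2 (2 ^ e + 1) := by rw [hlog]; push_cast; omega
    _ ≤ k - Nat.log 2 k := monotone_sub_log one_lt_two hk
    _ ≤ k - padicValNat 2 k := by have := padicValNat_le_nat_log (p := 2) k; omega

lemma padicValRat_two_pow_div (k : ℕ) :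
    padicValRat 2 ((2 : ℚ) ^ (k + 1) / (k + 1)) = (k + 1 : ℕ) - padicValNat 2 (k + 1) := by
  rw [← Nat.cast_add_one, padicValRat.div (by positivity) (by positivity), padicValRat_two_pow,
    padicValRat.of_nat]

lemma two_pow_sub_lt_padicValRat_sumTwoPowDiv_sub {e M : ℕ} (he : 1 ≤ e) (hM : 2 ^ e < M) :
    (2 ^ e : ℤ) - e < padicValRat 2 (sumTwoPowDiv M - sumTwoPowDiv (2 ^ e)) := by
  rw [sumTwoPowDiv, sumTwoPowDiv, ← sum_range_add_sum_Ico _ hM.le, add_sub_cancel_left]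
  refine Int.lt_iff_add_one_le.mpr (le_padicValRat_sum (fun k hk => ?_) ?_)
  · rw [padicValRat_two_pow_div]
    exact two_pow_sub_lt_sub_padicValNat he (by simp at hk; omega)
  · exact (sum_pos (fun _ _ => by positivity) (nonempty_Ico.mpr hM)).ne'

lemma padicValRat_sumTwoPowDiv_two_pow_sub_one {e : ℕ} (he : 1 ≤ e) :
    padicValRat 2 (sumTwoPowDiv (2 ^ e - 1)) = 2 ^ e - e := by
  have htwo : 2 ≤ 2 ^ e := Nat.le_self_pow (by omega) 2
  have hpow : 2 ^ e - 1 + 1 = 2 ^ e := by omega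
  have hlt : 2 ^ e < 2 ^ (e + 2) := Nat.pow_lt_pow_right one_lt_two (by omega)
  set t : ℚ := 2 ^ (2 ^ e - 1 + 1) / (((2 ^ e - 1 : ℕ) : ℚ) + 1)
  have ht : padicValRat 2 t = 2 ^ e - e := by
    rw [padicValRat_two_pow_div, hpow, padicValNat.prime_pow]
    push_cast; ring
  have htail := two_pow_sub_lt_padicValRat_sumTwoPowDiv_sub he hlt
  have hfull : (2 ^ e : ℤ) - e < padicValRat 2 (sumTwoPowDiv (2 ^ (e + 2))) := by
    have h := two_pow_sub_two_mul_le_padicValRat_sumTwoPowDiv (e + 2)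
    have he' : (e : ℤ) < 2 ^ e := by exact_mod_cast Nat.lt_two_pow_self
    have he'' : (1 : ℤ) ≤ e := by exact_mod_cast he
    rw [pow_add] at h
    push_cast at h
    linarith
  have hsplit : sumTwoPowDiv (2 ^ e) = sumTwoPowDiv (2 ^ (e + 2))
      + -(sumTwoPowDiv (2 ^ (e + 2)) - sumTwoPowDiv (2 ^ e)) := by ring
  have hhead : (2 ^ e : ℤ) - e < padicValRat 2 (sumTwoPowDiv (2 ^ e)) := by
    have h := padicValRat.min_le_padicValRat_add (p := 2)
      (hsplit ▸ (sumTwoPowDiv_pos (by positivity)).ne')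
    rw [← hsplit, padicValRat.neg] at h
    exact (lt_min hfull htail).trans_le h
  have hlast : sumTwoPowDiv (2 ^ e - 1) = -t + sumTwoPowDiv (2 ^ e) := by
    have h : sumTwoPowDiv (2 ^ e - 1 + 1) = sumTwoPowDiv (2 ^ e - 1) + t := sum_range_succ _ _
    rw [hpow] at h
    linear_combination -h
  rw [hlast, padicValRat.add_eq_of_lt (hlast ▸ (sumTwoPowDiv_pos (by omega)).ne')
    (neg_ne_zero.mpr (by positivity)) (sumTwoPowDiv_pos (by positivity)).ne'
    (by rwa [padicValRat.neg, ht]), padicValRat.neg, ht]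

theorem stmt_18 (e : ℕ) (he : 2 ≤ e) :
    padicValRat 2 (f (2 ^ e - 2)) = -((e : ℤ) - 1) := by
  have htwo : 2 ≤ 2 ^ e := Nat.le_self_pow (by omega) 2
  have heven : 2 ∣ 2 ^ e := dvd_pow_self 2 (by omega)
  have hodd : padicValNat 2 (2 ^ e - 1) = 0 := padicValNat.eq_zero_of_not_dvd (by omega)
  rw [padicValRat_f, show 2 ^ e - 2 + 1 = 2 ^ e - 1 by omega, hodd,
    padicValRat_sumTwoPowDiv_two_pow_sub_one (by omega), Nat.cast_sub (by omega)]
  push_cast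
  ring
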